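/- Let φ : E → F be a left-exact localization of topoi with congruence W_φ (the class of maps inverted by φ). Then φ⁻¹ induces an isomorphism between the poset of acyclic classes in F and the poset of acyclic classes in E containing W_φ, and this restricts to an isomorphism between congruences in F and congruences in E containing W_φ. -/

import Mathlib

open CategoryTheory CategoryTheory.Limits

universe v u

namespace Paper

/-- A class of maps is closed under colimits in the arrow category. -/
def ClosedUnderColimits {C : Type u} [Category.{v} C] (P : MorphismProperty C) : Prop :=
  ∀ (J : Type v) [SmallCategory J] (D : J ⥤ Arrow C)
    (c : Cocone D), IsColimit c → (∀ j, P (D.obj j).hom) → P c.pt.hom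

/-- A class of maps is closed under finite limits in the arrow category. -/
def ClosedUnderFiniteLimits {C : Type u} [Category.{v} C] (P : MorphismProperty C) : Prop :=
  ∀ (J : Type v) [SmallCategory J] [FinCategory J] (D : J ⥤ Arrow C)
    (c : Cone D), IsLimit c → (∀ j, P (D.obj j).hom) → P c.pt.hom

/-- An acyclic class of maps: contains isomorphisms, closed under composition,
colimits in the arrow category, and base change. -/
structure AcyclicClass (C : Type u) [Category.{v} C] where
  P : MorphismProperty C
  iso : ∀ ⦃X Y : C⦄ (f : X ⟶ Y), IsIso f → P f
  comp : ∀ ⦃X Y Z : C⦄ (f : X ⟶ Y) (g : Y ⟶ Z), P f → P g → P (f ≫ g)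
  colim : ClosedUnderColimits P
  base_change : ∀ ⦃X Y X' Y' : C⦄ (f : X ⟶ Y) (f' : X' ⟶ Y') (g : Y' ⟶ Y) (g' : X' ⟶ X),
    IsPullback g' f' f g → P f → P f'

/-- The smallest acyclic class containing `S` (the acyclic class generated by `S`). -/
def acClosure {C : Type u} [Category.{v} C] (S : MorphismProperty C) : MorphismProperty C :=
  fun _ _ f => ∀ A : AcyclicClass C, (∀ ⦃X Y : C⦄ (g : X ⟶ Y), S g → A.P g) → A.P f

/-- The smallest congruence (acyclic class closed under finite limits) containing `S`. -/
def congClosure {C : Type u} [Category.{v} C] (S : MorphismProperty C) : MorphismProperty C :=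
  fun _ _ f => ∀ A : AcyclicClass C, ClosedUnderFiniteLimits A.P →
    (∀ ⦃X Y : C⦄ (g : X ⟶ Y), S g → A.P g) → A.P f

/-- A (surjection, monomorphism) image factorization for every map:
`f = e f ≫ m f` with `e f` an effective epi and `m f` a mono. -/
structure ImageFactorisation (C : Type u) [Category.{v} C] where
  mid : ∀ {X Y : C}, (X ⟶ Y) → C
  e : ∀ {X Y : C} (f : X ⟶ Y), X ⟶ mid f
  m : ∀ {X Y : C} (f : X ⟶ Y), mid f ⟶ Y
  fac : ∀ {X Y : C} (f : X ⟶ Y), e f ≫ m f = f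
  epi : ∀ {X Y : C} (f : X ⟶ Y), EffectiveEpi (e f)
  mono : ∀ {X Y : C} (f : X ⟶ Y), Mono (m f)

/-- Iterated diagonal of an arrow: `iterDiag 0 f = f`, `iterDiag (n+1) f = iterDiag n (Δ f)`. -/
noncomputable def iterDiag {C : Type u} [Category.{v} C] [HasPullbacks C] :
    ℕ → Arrow C → Arrow C
  | 0, f => f
  | n+1, f => iterDiag n (Arrow.mk (pullback.diagonal f.hom))

/-- The class of maps all of whose iterated diagonals lie in `P`. -/
def suspInfty {C : Type u} [Category.{v} C] [HasPullbacks C] (P : MorphismProperty C) :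
    MorphismProperty C :=
  fun _ _ f => ∀ n : ℕ, P (iterDiag n (Arrow.mk f)).hom

/-- The class of `P`-hypercoverings: maps whose iterated diagonals all have image in `P`. -/
def hcover {C : Type u} [Category.{v} C] [HasPullbacks C] (F : ImageFactorisation C)
    (P : MorphismProperty C) : MorphismProperty C :=
  fun _ _ f => ∀ n : ℕ, P (F.m (iterDiag n (Arrow.mk f)).hom)

/-- `connMaps n` : maps whose first `n` iterated diagonals (starting with the map itself)
are effective epimorphisms.  `connMaps 1` is the class of surjections. -/
def connMaps {C : Type u} [Category.{v} C] [HasPullbacks C] (n : ℕ) : MorphismProperty C :=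
  fun _ _ f => ∀ k < n, EffectiveEpi (iterDiag k (Arrow.mk f)).hom

/-- ∞-connected maps: all iterated diagonals are effective epimorphisms. -/
def infConn {C : Type u} [Category.{v} C] [HasPullbacks C] : MorphismProperty C :=
  fun _ _ f => ∀ k : ℕ, EffectiveEpi (iterDiag k (Arrow.mk f)).hom

/-- `u` is (uniquely) left orthogonal to `f`: every commutative square has a unique diagonal
filler. -/
def UniqueLift {C : Type u} [Category.{v} C] {A B X Y : C} (u : A ⟶ B) (f : X ⟶ Y) : Prop :=
  ∀ (a : A ⟶ X) (b : B ⟶ Y), u ≫ b = a ≫ f → ∃! d : B ⟶ X, u ≫ d = a ∧ d ≫ f = b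

/-- A class of maps is local: membership can be checked after base change along
an effective epimorphic family. -/
def IsLocalClass {C : Type u} [Category.{v} C] [HasPullbacks C] (M : MorphismProperty C) : Prop :=
  ∀ ⦃X Y : C⦄ (f : X ⟶ Y) (I : Type v) (B : I → C) (g : ∀ i, B i ⟶ Y),
    EffectiveEpiFamily B g → (∀ i, M (pullback.snd f (g i))) → M f

/-- A Grothendieck topology on a topos: a class of monomorphisms containing isomorphisms,
closed under composition and base change, local, and right cancellable among monos. -/
structure IsGTopology {C : Type u} [Category.{v} C] [HasPullbacks C]
    (G : MorphismProperty C) : Prop where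
  mono : ∀ ⦃X Y : C⦄ (f : X ⟶ Y), G f → Mono f
  iso : ∀ ⦃X Y : C⦄ (f : X ⟶ Y), IsIso f → G f
  comp : ∀ ⦃X Y Z : C⦄ (f : X ⟶ Y) (g : Y ⟶ Z), G f → G g → G (f ≫ g)
  base_change : ∀ ⦃X Y X' Y' : C⦄ (f : X ⟶ Y) (f' : X' ⟶ Y') (g : Y' ⟶ Y) (g' : X' ⟶ X),
    IsPullback g' f' f g → G f → G f'
  localClass : IsLocalClass G
  right_cancel : ∀ ⦃X Y Z : C⦄ (u : X ⟶ Y) (v : Y ⟶ Z), Mono u → Mono v → G (u ≫ v) → G v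

/-- A Lawvere–Tierney topology, presented as a closure operator on subobject lattices
which is monotone, inflating, idempotent, and natural (compatible with pullback). -/
structure LTTopology (C : Type u) [Category.{v} C] [HasPullbacks C] where
  j : ∀ (A : C), Subobject A → Subobject A
  monotone : ∀ (A : C) (S T : Subobject A), S ≤ T → j A S ≤ j A T
  inflating : ∀ (A : C) (S : Subobject A), S ≤ j A S
  idem : ∀ (A : C) (S : Subobject A), j A (j A S) = j A S
  natural : ∀ ⦃A B : C⦄ (f : A ⟶ B) (S : Subobject B),
    (Subobject.pullback f).obj (j B S) = j A ((Subobject.pullback f).obj S)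

/-- The class of `j`-dense monomorphisms. -/
def DenseClass {C : Type u} [Category.{v} C] [HasPullbacks C] (jt : LTTopology C) :
    MorphismProperty C :=
  fun _ A m => ∃ h : Mono m, jt.j A (@Subobject.mk _ _ _ _ m h) = ⊤

/-- The class of `j`-closed monomorphisms. -/
def ClosedClass {C : Type u} [Category.{v} C] [HasPullbacks C] (jt : LTTopology C) :
    MorphismProperty C :=
  fun _ A m => ∃ h : Mono m, jt.j A (@Subobject.mk _ _ _ _ m h) = @Subobject.mk _ _ _ _ m h

/-- The smallest Grothendieck topology containing `S`. -/
def gtopClosure {C : Type u} [Category.{v} C] [HasPullbacks C] (S : MorphismProperty C) :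
    MorphismProperty C :=
  fun _ _ f => ∀ G : MorphismProperty C, IsGTopology G →
    (∀ ⦃X Y : C⦄ (g : X ⟶ Y), S g → G g) → G f

/-- The class of `G`-coverings: maps whose image lies in `G`. -/
def coverOf {C : Type u} [Category.{v} C] (F : ImageFactorisation C) (G : MorphismProperty C) :
    MorphismProperty C :=
  fun _ _ f => G (F.m f)

/-- The class of `G`-closed monomorphisms: monomorphisms uniquely right orthogonal to `G`. -/
def closeOf {C : Type u} [Category.{v} C] (G : MorphismProperty C) : MorphismProperty C :=
  fun _ _ f => Mono f ∧ ∀ ⦃S A : C⦄ (u : S ⟶ A), G u → UniqueLift u f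

end Paper

/-!
The inverse image `φ⁻¹ B` of an acyclic class is acyclic because `φ` preserves colimits and
pullbacks, colimits and finite limits in arrow categories being computed pointwise. The inverse
bijection sends `A ⊇ W_φ` to `ι⁻¹ A`. Since the counit `φ ι ⟶ 𝟭` is an isomorphism,
`ι⁻¹ (φ⁻¹ B) = B`. Conversely `f ∈ A ↔ ι (φ f) ∈ A` for `A ⊇ W_φ`: the unit is a square from `f`
to `ι (φ f)` whose two sides lie in `W_φ`, and `ι (φ f)` (resp. `f`) factors as a cobase change of
`f` (resp. base change of `ι (φ f)`) followed by a map that `φ` inverts. The same identity, with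
colimits in `F` being `φ` of colimits in `E`, shows that `ι⁻¹ A` is closed under colimits.
Finite limits transfer both ways because `φ` and `ι` both preserve them.
-/

namespace CategoryTheory

instance Arrow.preservesLimitsOfShape_leftFunc {T : Type*} [Category* T] (J : Type*) [Category* J]
    [HasLimitsOfShape J T] : PreservesLimitsOfShape J (Arrow.leftFunc : Arrow T ⥤ T) where
  preservesLimit := preservesLimit_of_preserves_limit_cone
    (Comma.coneOfPreservesIsLimit _ (limit.isLimit _) (limit.isLimit _)) (limit.isLimit _)

instance Arrow.preservesLimitsOfShape_rightFunc {T : Type*} [Category* T] (J : Type*) [Category* J]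
    [HasLimitsOfShape J T] : PreservesLimitsOfShape J (Arrow.rightFunc : Arrow T ⥤ T) where
  preservesLimit := preservesLimit_of_preserves_limit_cone
    (Comma.coneOfPreservesIsLimit _ (limit.isLimit _) (limit.isLimit _)) (limit.isLimit _)

namespace Functor

variable {C D : Type*} [Category* C] [Category* D] (G : C ⥤ D)

instance preservesColimitsOfShape_mapArrow (J : Type*) [Category* J] [HasColimitsOfShape J C]
    [PreservesColimitsOfShape J G] : PreservesColimitsOfShape J G.mapArrow where
  preservesColimit {_} := ⟨fun hc => ⟨Comma.fstSndJointlyReflectColimit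
    (isColimitOfPreserves G (isColimitOfPreserves Arrow.leftFunc hc))
    (isColimitOfPreserves G (isColimitOfPreserves Arrow.rightFunc hc))⟩⟩

instance preservesLimitsOfShape_mapArrow (J : Type*) [Category* J] [HasLimitsOfShape J C]
    [PreservesLimitsOfShape J G] : PreservesLimitsOfShape J G.mapArrow where
  preservesLimit {_} := ⟨fun hc => ⟨Comma.fstSndJointlyReflectLimit
    (isLimitOfPreserves G (isLimitOfPreserves Arrow.leftFunc hc))
    (isLimitOfPreserves G (isLimitOfPreserves Arrow.rightFunc hc))⟩⟩

end Functor

lemma MorphismProperty.inverseImage_inverseImage_eq_self_of_isIso_counit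
    {C D : Type*} [Category* C] [Category* D] (P : MorphismProperty D) [P.RespectsIso]
    {L : C ⥤ D} {R : D ⥤ C} (adj : L ⊣ R) [IsIso adj.counit] :
    (P.inverseImage L).inverseImage R = P := by
  ext X Y g
  exact P.arrow_mk_iso_iff (CategoryTheory.Arrow.isoMk (asIso (adj.counit.app X))
    (asIso (adj.counit.app Y)) (adj.counit.naturality g).symm)

end CategoryTheory

namespace Paper

variable {C D : Type*} [Category.{v} C] [Category.{v} D]

lemma ClosedUnderColimits.inverseImage {P : MorphismProperty D} (hP : ClosedUnderColimits P)
    (G : C ⥤ D) [HasColimits C] [PreservesColimits G] :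
    ClosedUnderColimits (P.inverseImage G) :=
  fun J _ K _ hc hK => hP J (K ⋙ G.mapArrow) _ (isColimitOfPreserves G.mapArrow hc) hK

lemma ClosedUnderFiniteLimits.inverseImage {P : MorphismProperty D}
    (hP : ClosedUnderFiniteLimits P) (G : C ⥤ D) [HasFiniteLimits C] [PreservesFiniteLimits G] :
    ClosedUnderFiniteLimits (P.inverseImage G) :=
  fun J _ _ K _ hc hK => hP J (K ⋙ G.mapArrow) _ (isLimitOfPreserves G.mapArrow hc) hK

lemma ClosedUnderColimits.mem_of_isColimit {P : MorphismProperty C} (hP : ClosedUnderColimits P)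
    {J : Type} [SmallCategory J] {K : J ⥤ Arrow C} {c : Cocone K} (hc : IsColimit c)
    (hK : ∀ j, P (K.obj j).hom) : P c.pt.hom :=
  let e := ULiftHomULiftCategory.equiv.{v, v} J
  hP _ (e.inverse ⋙ K) (c.whisker e.inverse) (hc.whiskerEquivalence e.symm) fun _ => hK _

namespace AcyclicClass

theorem ext {A B : AcyclicClass C} (h : A.P = B.P) : A = B := by
  cases A; cases B; cases h; rfl

def comap (B : AcyclicClass D) (G : C ⥤ D) [PreservesLimitsOfShape WalkingCospan G]
    (hcolim : ClosedUnderColimits (B.P.inverseImage G)) : AcyclicClass C where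
  P := B.P.inverseImage G
  iso _ _ f _ := B.iso (G.map f) inferInstance
  comp _ _ _ f g hf hg := by
    simpa only [MorphismProperty.inverseImage_iff, G.map_comp] using B.comp _ _ hf hg
  colim := hcolim
  base_change _ _ _ _ _ _ _ _ h hf := B.base_change _ _ _ _ (G.map_isPullback h) hf

section

variable (A : AcyclicClass C)

instance respectsIso : A.P.RespectsIso :=
  MorphismProperty.RespectsIso.mk _ (fun _ _ hf => A.comp _ _ (A.iso _ inferInstance) hf)
    (fun _ _ hf => A.comp _ _ hf (A.iso _ inferInstance))

/-- `r` is the colimit in `Arrow C` of the span `𝟙 X ← 𝟙 Z → l`. -/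
lemma of_isPushout {Z X Y Q : C} {t : Z ⟶ X} {l : Z ⟶ Y} {r : X ⟶ Q} {b : Y ⟶ Q}
    (h : IsPushout t l r b) (hl : A.P l) : A.P r := by
  let a : Arrow.mk (𝟙 Z) ⟶ Arrow.mk (𝟙 X) := Arrow.homMk t t
  let s : Arrow.mk (𝟙 Z) ⟶ Arrow.mk l := Arrow.homMk (𝟙 Z) l
  let inl : Arrow.mk (𝟙 X) ⟶ Arrow.mk r := Arrow.homMk (𝟙 X) r
  let inr : Arrow.mk l ⟶ Arrow.mk r := Arrow.homMk t b h.w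
  have hw : a ≫ inl = s ≫ inr := by ext <;> simp [a, s, inl, inr, h.w]
  let c := PushoutCocone.mk inl inr hw
  have hc : IsColimit c := Comma.fstSndJointlyReflectColimit
    ((PushoutCocone.isColimitMapCoconeEquiv c Arrow.leftFunc).symm IsPushout.of_id_snd.isColimit)
    ((PushoutCocone.isColimitMapCoconeEquiv c Arrow.rightFunc).symm h.isColimit)
  refine A.colim.mem_of_isColimit hc ?_
  rintro (_ | _ | _)
  exacts [A.iso (𝟙 Z) inferInstance, A.iso (𝟙 X) inferInstance, hl]

variable {G : C ⥤ D} (hW : ∀ ⦃X Y : C⦄ (f : X ⟶ Y), IsIso (G.map f) → A.P f)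
include hW

/-- `g` is the cobase change of `f` along `u`, followed by a map that `G` inverts. -/
lemma mem_of_commSq_of_mem [HasPushouts C] [PreservesColimitsOfShape WalkingSpan G]
    {X Y X' Y' : C} {f : X ⟶ Y} {g : X' ⟶ Y'} {u : X ⟶ X'} {w : Y ⟶ Y'} (sq : CommSq u f g w)
    [IsIso (G.map u)] [IsIso (G.map w)] (hf : A.P f) : A.P g := by
  have hp := IsPushout.of_hasPushout u f
  have : IsIso (G.map (pushout.inr u f)) := (G.map_isPushout hp).isIso_inr_of_isIso
  have : IsIso (G.map (pushout.desc g w sq.w)) :=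
    IsIso.of_isIso_fac_left (by rw [← G.map_comp, pushout.inr_desc])
  rw [← pushout.inl_desc g w sq.w]
  exact A.comp _ _ (A.of_isPushout hp hf) (hW _ inferInstance)

/-- `f` is a map that `G` inverts, followed by the base change of `g` along `w`. -/
lemma mem_of_mem_of_commSq [HasPullbacks C] [PreservesLimitsOfShape WalkingCospan G]
    {X Y X' Y' : C} {f : X ⟶ Y} {g : X' ⟶ Y'} {u : X ⟶ X'} {w : Y ⟶ Y'} (sq : CommSq u f g w)
    [IsIso (G.map u)] [IsIso (G.map w)] (hg : A.P g) : A.P f := by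
  have hp := IsPullback.of_hasPullback g w
  have : IsIso (G.map (pullback.fst g w)) := (G.map_isPullback hp).isIso_fst_of_isIso
  have : IsIso (G.map (pullback.lift u f sq.w)) :=
    IsIso.of_isIso_fac_right (by rw [← G.map_comp, pullback.lift_fst])
  rw [← pullback.lift_snd u f sq.w]
  exact A.comp _ _ (hW _ inferInstance) (A.base_change _ _ _ _ hp hg)

end

section Reflective

variable {E F : Type*} [Category.{v} E] [Category.{v} F] {φ : E ⥤ F} {ι : F ⥤ E}
  [ι.Full] [ι.Faithful] [HasPullbacks E]
  (A : AcyclicClass E) (adj : φ ⊣ ι) (hW : ∀ ⦃X Y : E⦄ (f : X ⟶ Y), IsIso (φ.map f) → A.P f)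
include adj hW

lemma inverseImage_inverseImage_eq_self_of_inverts [HasPushouts E]
    [PreservesColimitsOfShape WalkingSpan φ] [PreservesLimitsOfShape WalkingCospan φ] :
    (A.P.inverseImage ι).inverseImage φ = A.P := by
  ext X Y f
  have sq : CommSq (adj.unit.app X) f (ι.map (φ.map f)) (adj.unit.app Y) :=
    ⟨(adj.unit.naturality f).symm⟩
  exact ⟨A.mem_of_mem_of_commSq hW sq, A.mem_of_commSq_of_mem hW sq⟩

/-- The colimit of `K` is, up to the counit, `φ` of the colimit of `K ⋙ ι.mapArrow`. -/
lemma closedUnderColimits_inverseImage_of_inverts [HasColimits E] [PreservesColimits φ]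
    [PreservesLimitsOfShape WalkingCospan φ] : ClosedUnderColimits (A.P.inverseImage ι) := by
  intro J _ K c hc hK
  have hmem : A.P (colimit (K ⋙ ι.mapArrow)).hom := A.colim J _ _ (colimit.isColimit _) hK
  have hφ := isColimitOfPreserves φ.mapArrow (colimit.isColimit (K ⋙ ι.mapArrow))
  let e : (K ⋙ ι.mapArrow) ⋙ φ.mapArrow ≅ K :=
    K.isoWhiskerLeft ((Functor.mapArrowFunctor F F).mapIso (asIso adj.counit))
  refine (A.P.arrow_iso_iff (ι.mapArrow.mapIso (hφ.coconePointsIsoOfNatIso hc e))).1 ?_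
  exact (A.inverseImage_inverseImage_eq_self_of_inverts adj hW).ge _ hmem

end Reflective

end AcyclicClass

end Paper

theorem transport_acyclic_classes_general {E : Type u} {F : Type u}
    [Category.{v} E] [Category.{v} F]
    [HasFiniteLimits E] [HasColimits E] [HasFiniteLimits F]
    (φ : E ⥤ F) (ι : F ⥤ E) (adj : φ ⊣ ι) [ι.Full] [ι.Faithful]
    [PreservesColimits φ] [PreservesFiniteLimits φ] :
    ∃ e : Paper.AcyclicClass F ≃
        {A : Paper.AcyclicClass E // ∀ ⦃X Y : E⦄ (f : X ⟶ Y), IsIso (φ.map f) → A.P f},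
      (∀ (B : Paper.AcyclicClass F) ⦃X Y : E⦄ (f : X ⟶ Y),
        (e B).val.P f ↔ B.P (φ.map f)) ∧
      (∀ B : Paper.AcyclicClass F,
        Paper.ClosedUnderFiniteLimits B.P ↔ Paper.ClosedUnderFiniteLimits (e B).val.P) := by
  have := adj.rightAdjoint_preservesLimits
  refine ⟨{ toFun B := ⟨B.comap φ (B.colim.inverseImage φ), fun _ _ f hf => B.iso (φ.map f) hf⟩
            invFun A := A.1.comap ι (A.1.closedUnderColimits_inverseImage_of_inverts adj A.2)
            left_inv B := Paper.AcyclicClass.ext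
              (B.P.inverseImage_inverseImage_eq_self_of_isIso_counit adj)
            right_inv A := Subtype.ext (Paper.AcyclicClass.ext
              (A.1.inverseImage_inverseImage_eq_self_of_inverts adj A.2)) },
    fun _ _ _ _ => Iff.rfl, fun B => ⟨fun hB => hB.inverseImage φ, fun hB => ?_⟩⟩
  rw [← B.P.inverseImage_inverseImage_eq_self_of_isIso_counit adj]
  exact hB.inverseImage ι

/-- Transport along a left-exact localization `φ : E → F` (a cocontinuous left-exact
reflector): `φ⁻¹` induces a bijection between acyclic classes of `F` and acyclic classes of `E`
containing `W_φ`, which restricts to congruences (acyclic classes closed under finite limits). -/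
theorem transport_acyclic_classes {E : Type u} {F : Type u}
    [Category.{v} E] [Category.{v} F]
    [HasFiniteLimits E] [HasColimits E] [HasFiniteLimits F] [HasColimits F]
    (φ : E ⥤ F) (ι : F ⥤ E) (adj : φ ⊣ ι) [ι.Full] [ι.Faithful]
    [PreservesColimits φ] [PreservesFiniteLimits φ] :
    ∃ e : Paper.AcyclicClass F ≃
        {A : Paper.AcyclicClass E // ∀ ⦃X Y : E⦄ (f : X ⟶ Y), IsIso (φ.map f) → A.P f},
      (∀ (B : Paper.AcyclicClass F) ⦃X Y : E⦄ (f : X ⟶ Y),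
        (e B).val.P f ↔ B.P (φ.map f)) ∧
      (∀ B : Paper.AcyclicClass F,
        Paper.ClosedUnderFiniteLimits B.P ↔ Paper.ClosedUnderFiniteLimits (e B).val.P) :=
  transport_acyclic_classes_general φ ι adj
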